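/- Let ω₁, ω₂ be regular majorants, let i, j be orthogonal imaginary units, and let f be a slice regular function on D⁴ whose ℂ(i)-components f₁, f₂ on D_i satisfy ‖f_k(x) − f_k(y)‖ ≤ C_k·ω_k(‖x − y‖) for all x, y ∈ D_i, k = 1, 2. Then there exists C > 0 such that for all x ∈ D_i, ‖f′(x)‖ ≤ C·√(ω₁(1 − ‖x‖)² + ω₂(1 − ‖x‖)²)/(1 − ‖x‖). -/

import Mathlib

noncomputable section

notation "ℍ" => Quaternion ℝ

def IsImaginaryUnit (i : ℍ) : Prop := i.re = 0 ∧ ‖i‖ = 1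

def OrthogonalUnits (i j : ℍ) : Prop :=
  IsImaginaryUnit i ∧ IsImaginaryUnit j ∧ (i * star j).re = 0

def qslice (i : ℍ) : Set ℍ := {z | ∃ x y : ℝ, z = (x : ℍ) + y • i}

def sliceDisc (i : ℍ) : Set ℍ := {z ∈ qslice i | ‖z‖ < 1}

def sliceCircle (i : ℍ) : Set ℍ := {z ∈ qslice i | ‖z‖ = 1}

def unitBall : Set ℍ := {q : ℍ | ‖q‖ < 1}

structure IsMajorant (ω : ℝ → ℝ) : Prop where
  contOn : ContinuousOn ω (Set.Icc 0 2)
  map_zero : ω 0 = 0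
  nonneg : ∀ t ∈ Set.Icc (0:ℝ) 2, 0 ≤ ω t
  mono : MonotoneOn ω (Set.Icc 0 2)
  div_anti : AntitoneOn (fun t => ω t / t) (Set.Ioc 0 2)

def IsRegularMajorant (ω : ℝ → ℝ) : Prop :=
  IsMajorant ω ∧ ∃ C > 0, ∀ x : ℝ, 0 < x → x < 2 →
    (∫ t in (0:ℝ)..x, ω t / t) + x * (∫ t in x..(2:ℝ), ω t / t ^ 2) ≤ C * ω x

def SliceRegularOn (f : ℍ → ℍ) (a : ℕ → ℍ) : Prop :=
  (∀ r : ℝ, 0 ≤ r → r < 1 → Summable (fun n => ‖a n‖ * r ^ n)) ∧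
  (∀ q ∈ unitBall, HasSum (fun n => q ^ n * a n) (f q))

def IsSliceRegular (f : ℍ → ℍ) : Prop := ∃ a : ℕ → ℍ, SliceRegularOn f a

def SliceDeriv (f f' : ℍ → ℍ) (a : ℕ → ℍ) : Prop :=
  SliceRegularOn f a ∧
  (∀ q ∈ unitBall, HasSum (fun n => ((n + 1 : ℕ) : ℝ) • (q ^ n * a (n + 1))) (f' q))

def expI (i : ℍ) (t : ℝ) : ℍ := (Real.cos t : ℍ) + Real.sin t • i

def poisson (i : ℍ) (u : ℍ → ℝ) (q : ℍ) : ℝ :=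
  (1 / (2 * Real.pi)) * ∫ t in (0:ℝ)..(2 * Real.pi),
    u (expI i t) * (1 - ‖q‖ ^ 2) / ‖q - expI i t‖ ^ 2

def comp1 (i : ℍ) (f : ℍ → ℍ) : ℍ → ℍ := fun q => (2⁻¹ : ℝ) • (f q - i * f q * i)

def comp2 (i j : ℍ) (f : ℍ → ℍ) : ℍ → ℍ := fun q => ((2⁻¹ : ℝ) • (f q + i * f q * i)) * j⁻¹


/-!
Identify `ℂ(i)` with `ℂ`. The map `q ↦ (q - i q i)/2` is the orthogonal projection of `ℍ` onto
`ℂ(i)`, and it is left `ℂ(i)`-linear; hence on `D_i` the first component of `f = ∑ qⁿ aₙ` is the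
holomorphic power series `g₁(z) = ∑ zⁿ bₙ`, `bₙ` the projection of `aₙ`, and the first component
of `f′` is `g₁′`. Since `j⁻¹` anticommutes with `i`, the second component of `f` is the first
component of `f j⁻¹`, which is again slice regular. On the disc of radius `1 - |z|` about `z` the
modulus of continuity keeps `g_k` within `C_k ω_k(1 - |z|)` of `g_k(z)`, so the Cauchy estimate
gives `|g_k′(z)| ≤ C_k ω_k(1 - |z|)/(1 - |z|)`; finally `f′ = f₁′ + f₂′ j` with `|j| = 1`.
-/

open Metric Set

theorem summable_succ_mul_pow_mul_norm {E : Type*} [SeminormedAddCommGroup E] {β : ℕ → E}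
    (hβ : ∀ r : ℝ, 0 ≤ r → r < 1 → Summable fun n => ‖β n‖ * r ^ n) {r : ℝ} (h0 : 0 ≤ r)
    (h1 : r < 1) : Summable fun n : ℕ => (n + 1) * r ^ n * ‖β (n + 1)‖ := by
  obtain ⟨s, hrs, hs1⟩ := exists_between h1
  have hs0 : 0 < s := h0.trans_lt hrs
  obtain ⟨M, hM⟩ := (hβ s hs0.le hs1).tendsto_atTop_zero.bddAbove_range
  have hρ : ‖r / s‖ < 1 := by
    rwa [Real.norm_of_nonneg (by positivity), div_lt_one hs0]
  have hgeom : Summable fun n : ℕ => (n + 1) * (r / s) ^ n := by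
    simpa [add_mul] using
      (summable_pow_mul_geometric_of_norm_lt_one 1 hρ).add (summable_geometric_of_norm_lt_one hρ)
  refine (hgeom.mul_left (M / s)).of_nonneg_of_le (fun n => by positivity) fun n => ?_
  calc (n + 1) * r ^ n * ‖β (n + 1)‖
        = (n + 1) * (r / s) ^ n * (‖β (n + 1)‖ * s ^ (n + 1)) / s := by
        rw [div_pow, pow_succ]
        field_simp
    _ ≤ (n + 1) * (r / s) ^ n * M / s := by gcongr; exact hM ⟨n + 1, rfl⟩
    _ = M / s * ((n + 1) * (r / s) ^ n) := by ring

theorem hasDerivAt_tsum_pow_mul {𝕜 : Type*} [RCLike 𝕜] {β : ℕ → 𝕜}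
    (hβ : ∀ r : ℝ, 0 ≤ r → r < 1 → Summable fun n => ‖β n‖ * r ^ n) {z : 𝕜}
    (hz : z ∈ ball (0 : 𝕜) 1) :
    HasDerivAt (fun y => ∑' n, y ^ n * β n) (∑' n : ℕ, (n + 1) * z ^ n * β (n + 1)) z := by
  rw [mem_ball_zero_iff] at hz
  obtain ⟨r, hzr, hr1⟩ := exists_between hz
  have hr0 : 0 < r := (norm_nonneg z).trans_lt hzr
  rw [← mem_ball_zero_iff] at hzr
  have hu : Summable fun n : ℕ => n * r ^ (n - 1) * ‖β n‖ := by
    rw [← summable_nat_add_iff 1]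
    simpa using summable_succ_mul_pow_mul_norm hβ hr0.le hr1
  have hbound : ∀ (n : ℕ), ∀ y ∈ ball (0 : 𝕜) r,
      ‖(n : 𝕜) * y ^ (n - 1) * β n‖ ≤ n * r ^ (n - 1) * ‖β n‖ := by
    intro n y hy
    rw [mem_ball_zero_iff] at hy
    simp only [norm_mul, norm_pow, RCLike.norm_natCast]
    gcongr
  have hsum0 : Summable fun n => (0 : 𝕜) ^ n * β n :=
    summable_of_ne_finset_zero (s := {0}) fun n hn => by simp_all
  have hderiv := hasDerivAt_tsum_of_isPreconnected hu isOpen_ball (convex_ball 0 r).isPreconnected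
    (fun n y _ => (hasDerivAt_pow n y).mul_const (β n)) hbound (mem_ball_self hr0) hsum0 hzr
  refine hderiv.congr_deriv ?_
  rw [(Summable.of_norm_bounded hu fun n => hbound n z hzr).tsum_eq_zero_add]
  simp

theorem norm_deriv_le_of_modulus {E : Type*} [NormedAddCommGroup E] [NormedSpace ℂ E]
    {g : ℂ → E} {ω : ℝ → ℝ} {C : ℝ} (hC : 0 ≤ C) (hω : MonotoneOn ω (Icc 0 2))
    (hg : DifferentiableOn ℂ g (ball 0 1)) {z : ℂ} (hz : z ∈ ball (0 : ℂ) 1)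
    (hmod : ∀ y ∈ ball (0 : ℂ) 1, ‖g y - g z‖ ≤ C * ω ‖y - z‖) :
    ‖deriv g z‖ ≤ C * ω (1 - ‖z‖) / (1 - ‖z‖) := by
  rw [mem_ball_zero_iff] at hz
  have hR : 0 < 1 - ‖z‖ := sub_pos.2 hz
  have hsub : ball z (1 - ‖z‖) ⊆ ball 0 1 := ball_subset_ball' (by simp)
  refine Complex.norm_deriv_le_div_of_mapsTo_ball (hg.mono hsub) (fun y hy => ?_) hR
  rw [mem_ball, dist_eq_norm] at hy
  rw [mem_closedBall, dist_eq_norm]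
  refine (hmod y (hsub (mem_ball.2 (by rwa [dist_eq_norm])))).trans ?_
  gcongr
  exact hω ⟨norm_nonneg _, by linarith [norm_nonneg z]⟩ ⟨hR.le, by linarith [norm_nonneg z]⟩ hy.le

theorem Quaternion.re_mul_comm (p q : ℍ) : (p * q).re = (q * p).re := by
  simp only [Quaternion.re_mul]; ring

namespace IsImaginaryUnit

variable {i : ℍ}

theorem normSq_eq_one (hi : IsImaginaryUnit i) : Quaternion.normSq i = 1 := by
  rw [Quaternion.normSq_eq_norm_mul_self, hi.2, mul_one]

theorem star_eq_neg (hi : IsImaginaryUnit i) : star i = -i :=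
  QuaternionAlgebra.star_eq_neg.2 hi.1

theorem mul_self (hi : IsImaginaryUnit i) : i * i = -1 := by
  have h := Quaternion.self_mul_star i
  rw [hi.star_eq_neg, hi.normSq_eq_one, mul_neg, Quaternion.coe_one] at h
  exact neg_eq_iff_eq_neg.mp h

theorem ne_zero (hi : IsImaginaryUnit i) : i ≠ 0 := by
  rintro rfl
  simpa using hi.2

end IsImaginaryUnit

theorem OrthogonalUnits.mul_comm_neg {i j : ℍ} (hij : OrthogonalUnits i j) :
    i * j = -(j * i) := by
  obtain ⟨hi, hj, ho⟩ := hij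
  have hre : (i * j).re = 0 := by
    rwa [hj.star_eq_neg, mul_neg, Quaternion.re_neg, neg_eq_zero] at ho
  have hstar : star (i * j) = j * i := by
    rw [star_mul, hi.star_eq_neg, hj.star_eq_neg, neg_mul_neg]
  rw [eq_neg_iff_add_eq_zero, ← hstar, Quaternion.self_add_star, hre, Quaternion.coe_zero,
    mul_zero]

theorem OrthogonalUnits.inv_mul_comm_neg {i j : ℍ} (hij : OrthogonalUnits i j) :
    j⁻¹ * i = -(i * j⁻¹) := by
  have hj := hij.2.1.ne_zero
  calc j⁻¹ * i = j⁻¹ * (i * j) * j⁻¹ := by rw [mul_assoc _ (i * j), mul_inv_cancel_right₀ hj]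
    _ = -(i * j⁻¹) := by rw [hij.mul_comm_neg, mul_neg, neg_mul, inv_mul_cancel_left₀ hj]

/-- `q ↦ (re q, ⟪q, i⟫)`, the coordinates in the basis `1, i` of the orthogonal projection of `q`
onto `ℂ(i)`. -/
def sliceProj (i : ℍ) : ℍ →L[ℝ] ℂ :=
  LinearMap.toContinuousLinearMap
    { toFun := fun q => ⟨q.re, -(q * i).re⟩
      map_add' := fun p q => by
        apply Complex.ext <;>
          simp only [Complex.add_re, Complex.add_im, add_mul, Quaternion.re_add, neg_add]
      map_smul' := fun c q => by
        apply Complex.ext <;>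
          simp only [smul_mul_assoc, Quaternion.re_smul, smul_eq_mul, RingHom.id_apply,
            Complex.smul_re, Complex.smul_im, mul_neg] }

theorem sliceProj_apply (i q : ℍ) : sliceProj i q = ⟨q.re, -(q * i).re⟩ := rfl

namespace IsImaginaryUnit

variable {i : ℍ} (hi : IsImaginaryUnit i)

def sliceEmb : ℂ →ₐ[ℝ] ℍ := Complex.liftAux i hi.mul_self

include hi in
theorem sq_imI_add_sq_imJ_add_sq_imK : i.imI ^ 2 + i.imJ ^ 2 + i.imK ^ 2 = 1 := by
  have h := hi.normSq_eq_one
  rw [Quaternion.normSq_def', hi.1] at h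
  linarith

theorem sliceEmb_apply (z : ℂ) : hi.sliceEmb z = (z.re : ℍ) + z.im • i := rfl

theorem star_sliceEmb (z : ℂ) : star (hi.sliceEmb z) = hi.sliceEmb (starRingEnd ℂ z) := by
  simp [sliceEmb_apply, hi.star_eq_neg]

theorem norm_sliceEmb (z : ℂ) : ‖hi.sliceEmb z‖ = ‖z‖ := by
  have h : ((Quaternion.normSq (hi.sliceEmb z) : ℝ) : ℍ) = (Complex.normSq z : ℝ) := by
    rw [← Quaternion.self_mul_star, hi.star_sliceEmb, ← map_mul, Complex.mul_conj]
    exact hi.sliceEmb.commutes _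
  rw [Quaternion.coe_inj, Quaternion.normSq_eq_norm_mul_self, Complex.normSq_eq_norm_sq, sq] at h
  exact (mul_self_inj (norm_nonneg _) (norm_nonneg _)).1 h

theorem mem_sliceDisc_iff {x : ℍ} :
    x ∈ sliceDisc i ↔ ∃ z ∈ ball (0 : ℂ) 1, hi.sliceEmb z = x := by
  simp only [mem_ball_zero_iff]
  constructor
  · rintro ⟨⟨a, b, rfl⟩, hx⟩
    exact ⟨⟨a, b⟩, by rwa [← hi.norm_sliceEmb], rfl⟩
  · rintro ⟨z, hz, rfl⟩
    exact ⟨⟨z.re, z.im, rfl⟩, by rwa [hi.norm_sliceEmb]⟩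

theorem sliceProj_sliceEmb_mul (w : ℂ) (q : ℍ) :
    sliceProj i (hi.sliceEmb w * q) = w * sliceProj i q := by
  have hiqi : (i * q * i).re = -q.re := by
    rw [mul_assoc, Quaternion.re_mul_comm, mul_assoc, hi.mul_self]; simp
  have hiq : (i * q).re = (q * i).re := Quaternion.re_mul_comm _ _
  apply Complex.ext <;>
    simp only [sliceProj_apply, sliceEmb_apply, add_mul, smul_mul_assoc,
      Quaternion.coe_mul_eq_smul, Quaternion.re_add, Quaternion.re_smul, smul_eq_mul,
      Complex.mul_re, Complex.mul_im, hiqi, hiq] <;> ring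

theorem sliceEmb_sliceProj (q : ℍ) :
    hi.sliceEmb (sliceProj i q) = (2⁻¹ : ℝ) • (q - i * q * i) := by
  have h := hi.sq_imI_add_sq_imJ_add_sq_imK
  have h0 := hi.1
  ext <;> simp only [sliceEmb_apply, sliceProj_apply, Quaternion.re_add, Quaternion.imI_add,
    Quaternion.imJ_add, Quaternion.imK_add, Quaternion.re_sub, Quaternion.imI_sub,
    Quaternion.imJ_sub, Quaternion.imK_sub, Quaternion.re_smul, Quaternion.imI_smul,
    Quaternion.imJ_smul, Quaternion.imK_smul, Quaternion.re_coe, Quaternion.imI_coe,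
    Quaternion.imJ_coe, Quaternion.imK_coe, Quaternion.re_mul, Quaternion.imI_mul,
    Quaternion.imJ_mul, Quaternion.imK_mul, smul_eq_mul, h0]
  · linear_combination (-q.re / 2) * h
  · linear_combination (q.imI / 2) * h
  · linear_combination (q.imJ / 2) * h
  · linear_combination (q.imK / 2) * h

include hi in
theorem norm_sliceProj_le (q : ℍ) : ‖sliceProj i q‖ ≤ ‖q‖ := by
  rw [← hi.norm_sliceEmb, hi.sliceEmb_sliceProj, norm_smul, Real.norm_of_nonneg (by norm_num)]
  calc 2⁻¹ * ‖q - i * q * i‖ ≤ 2⁻¹ * (‖q‖ + ‖i * q * i‖) := by gcongr; exact norm_sub_le _ _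
    _ = ‖q‖ := by rw [norm_mul, norm_mul, hi.2]; ring

theorem hasSum_sliceProj {z : ℂ} {c : ℕ → ℍ} {s : ℍ}
    (h : HasSum (fun n => hi.sliceEmb z ^ n * c n) s) :
    HasSum (fun n => z ^ n * sliceProj i (c n)) (sliceProj i s) := by
  simpa only [← map_pow, hi.sliceProj_sliceEmb_mul] using (sliceProj i).hasSum h

theorem comp1_eq_sliceEmb_sliceProj (f : ℍ → ℍ) (q : ℍ) :
    comp1 i f q = hi.sliceEmb (sliceProj i (f q)) :=
  (hi.sliceEmb_sliceProj _).symm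

include hi in
theorem norm_comp1_deriv_le {f f' : ℍ → ℍ} {a : ℕ → ℍ} (hf : SliceDeriv f f' a) {ω : ℝ → ℝ}
    {C : ℝ} (hC : 0 ≤ C) (hω : MonotoneOn ω (Icc 0 2))
    (hmod : ∀ x ∈ sliceDisc i, ∀ y ∈ sliceDisc i, ‖comp1 i f x - comp1 i f y‖ ≤ C * ω ‖x - y‖)
    {x : ℍ} (hx : x ∈ sliceDisc i) :
    ‖comp1 i f' x‖ ≤ C * ω (1 - ‖x‖) / (1 - ‖x‖) := by
  obtain ⟨z, hz, rfl⟩ := hi.mem_sliceDisc_iff.1 hx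
  set β := fun n => sliceProj i (a n)
  have hβ (r : ℝ) (h0 : 0 ≤ r) (h1 : r < 1) : Summable fun n => ‖β n‖ * r ^ n :=
    (hf.1.1 r h0 h1).of_nonneg_of_le (fun n => by positivity)
      fun n => by gcongr; exact hi.norm_sliceProj_le _
  have hball {y : ℂ} (hy : y ∈ ball (0 : ℂ) 1) : hi.sliceEmb y ∈ unitBall :=
    show ‖_‖ < 1 by rwa [hi.norm_sliceEmb, ← mem_ball_zero_iff]
  have hf_eq {y : ℂ} (hy : y ∈ ball (0 : ℂ) 1) :
      comp1 i f (hi.sliceEmb y) = hi.sliceEmb (∑' n, y ^ n * β n) := by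
    rw [hi.comp1_eq_sliceEmb_sliceProj, (hi.hasSum_sliceProj (hf.1.2 _ (hball hy))).tsum_eq]
  have hf'_eq : comp1 i f' (hi.sliceEmb z) =
      hi.sliceEmb (∑' n : ℕ, (n + 1) * z ^ n * β (n + 1)) := by
    have h := hi.hasSum_sliceProj (c := fun n => ((n + 1 : ℕ) : ℝ) • a (n + 1))
      (by simpa only [mul_smul_comm] using hf.2 _ (hball hz))
    rw [hi.comp1_eq_sliceEmb_sliceProj, ← h.tsum_eq]
    congr 1
    refine tsum_congr fun n => ?_
    rw [map_smul, Complex.real_smul]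
    push_cast
    ring
  rw [hf'_eq, hi.norm_sliceEmb, hi.norm_sliceEmb, ← (hasDerivAt_tsum_pow_mul hβ hz).deriv]
  refine norm_deriv_le_of_modulus hC hω
    (fun y hy => (hasDerivAt_tsum_pow_mul hβ hy).differentiableAt.differentiableWithinAt) hz
    fun y hy => ?_
  have h := hmod _ (hi.mem_sliceDisc_iff.2 ⟨y, hy, rfl⟩) _ hx
  rwa [hf_eq hy, hf_eq hz, ← map_sub, ← map_sub, hi.norm_sliceEmb, hi.norm_sliceEmb] at h

end IsImaginaryUnit

theorem comp1_add_comp2_mul {j : ℍ} (hj : j ≠ 0) (i : ℍ) (f : ℍ → ℍ) (q : ℍ) :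
    comp1 i f q + comp2 i j f q * j = f q := by
  rw [comp1, comp2, inv_mul_cancel_right₀ hj]
  module

theorem OrthogonalUnits.comp2_eq {i j : ℍ} (hij : OrthogonalUnits i j) (f : ℍ → ℍ) :
    comp2 i j f = comp1 i fun q => f q * j⁻¹ := by
  funext q
  have h : i * (f q * j⁻¹) * i = -(i * f q * i * j⁻¹) :=
    calc i * (f q * j⁻¹) * i = i * f q * (j⁻¹ * i) := by noncomm_ring
      _ = -(i * f q * i * j⁻¹) := by rw [hij.inv_mul_comm_neg]; noncomm_ring
  rw [comp1, comp2, h, sub_neg_eq_add, smul_mul_assoc, add_mul]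

theorem SliceDeriv.mul_const {f f' : ℍ → ℍ} {a : ℕ → ℍ} (hf : SliceDeriv f f' a) (c : ℍ) :
    SliceDeriv (fun q => f q * c) (fun q => f' q * c) (fun n => a n * c) := by
  refine ⟨⟨fun r h0 h1 => ?_, fun q hq => ?_⟩, fun q hq => ?_⟩
  · simpa only [norm_mul, mul_right_comm] using (hf.1.1 r h0 h1).mul_right ‖c‖
  · simpa only [mul_assoc] using (hf.1.2 q hq).mul_right c
  · simpa only [mul_assoc, smul_mul_assoc] using (hf.2 q hq).mul_right c

theorem norm_sub_mem_Icc_of_mem_sliceDisc {i x y : ℍ} (hx : x ∈ sliceDisc i)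
    (hy : y ∈ sliceDisc i) : ‖x - y‖ ∈ Icc (0 : ℝ) 2 :=
  ⟨norm_nonneg _, by linarith [norm_sub_le x y, hx.2, hy.2]⟩

theorem IsMajorant.mul_le_max_zero_mul {ω : ℝ → ℝ} (hω : IsMajorant ω) (C : ℝ) {t : ℝ}
    (ht : t ∈ Icc (0 : ℝ) 2) : C * ω t ≤ max C 0 * ω t :=
  mul_le_mul_of_nonneg_right (le_max_left C 0) (hω.nonneg t ht)

theorem mul_add_mul_le_mul_sqrt {K₁ K₂ : ℝ} (hK₁ : 0 ≤ K₁) (hK₂ : 0 ≤ K₂) (u v : ℝ) :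
    K₁ * u + K₂ * v ≤ (K₁ + K₂) * √(u ^ 2 + v ^ 2) := by
  have hu : u ≤ √(u ^ 2 + v ^ 2) :=
    (le_abs_self u).trans (Real.abs_le_sqrt (le_add_of_nonneg_right (sq_nonneg v)))
  have hv : v ≤ √(u ^ 2 + v ^ 2) :=
    (le_abs_self v).trans (Real.abs_le_sqrt (le_add_of_nonneg_left (sq_nonneg u)))
  rw [add_mul]
  gcongr

theorem stmt10 (ω₁ ω₂ : ℝ → ℝ) (hω₁ : IsRegularMajorant ω₁) (hω₂ : IsRegularMajorant ω₂)
    (i j : ℍ) (hij : OrthogonalUnits i j)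
    (f f' : ℍ → ℍ) (a : ℕ → ℍ) (hf : SliceDeriv f f' a)
    (C₁ C₂ : ℝ)
    (h1 : ∀ x ∈ sliceDisc i, ∀ y ∈ sliceDisc i,
      ‖comp1 i f x - comp1 i f y‖ ≤ C₁ * ω₁ ‖x - y‖)
    (h2 : ∀ x ∈ sliceDisc i, ∀ y ∈ sliceDisc i,
      ‖comp2 i j f x - comp2 i j f y‖ ≤ C₂ * ω₂ ‖x - y‖) :
    ∃ C > 0, ∀ x ∈ sliceDisc i,
      ‖f' x‖ ≤ C * Real.sqrt (ω₁ (1 - ‖x‖) ^ 2 + ω₂ (1 - ‖x‖) ^ 2) / (1 - ‖x‖) := by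
  have hi := hij.1
  have hj := hij.2.1
  refine ⟨max C₁ 0 + max C₂ 0 + 1, by positivity, fun x hx => ?_⟩
  set R := 1 - ‖x‖
  have hb₁ : ‖comp1 i f' x‖ ≤ max C₁ 0 * ω₁ R / R :=
    hi.norm_comp1_deriv_le hf (le_max_right _ _) hω₁.1.mono (fun x hx y hy => (h1 x hx y hy).trans
      (hω₁.1.mul_le_max_zero_mul C₁ (norm_sub_mem_Icc_of_mem_sliceDisc hx hy))) hx
  have hb₂ : ‖comp2 i j f' x‖ ≤ max C₂ 0 * ω₂ R / R := by
    rw [hij.comp2_eq]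
    refine hi.norm_comp1_deriv_le (hf.mul_const j⁻¹) (le_max_right _ _) hω₂.1.mono
      (fun x hx y hy => ?_) hx
    rw [← hij.comp2_eq]
    exact (h2 x hx y hy).trans
      (hω₂.1.mul_le_max_zero_mul C₂ (norm_sub_mem_Icc_of_mem_sliceDisc hx hy))
  calc ‖f' x‖ = ‖comp1 i f' x + comp2 i j f' x * j‖ := by rw [comp1_add_comp2_mul hj.ne_zero]
    _ ≤ ‖comp1 i f' x‖ + ‖comp2 i j f' x‖ := by
      simpa only [norm_mul, hj.2, mul_one] using norm_add_le (comp1 i f' x) (comp2 i j f' x * j)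
    _ ≤ (max C₁ 0 * ω₁ R + max C₂ 0 * ω₂ R) / R := by rw [add_div]; exact add_le_add hb₁ hb₂
    _ ≤ (max C₁ 0 + max C₂ 0 + 1) * √(ω₁ R ^ 2 + ω₂ R ^ 2) / R := by
      refine div_le_div_of_nonneg_right ?_ (sub_pos.2 hx.2).le
      refine (mul_add_mul_le_mul_sqrt (le_max_right _ _) (le_max_right _ _) _ _).trans ?_
      exact mul_le_mul_of_nonneg_right (by linarith) (Real.sqrt_nonneg _)
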